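/- Let A be an arborescence with weight functions w, c : E(A) → ℝ_{>0} satisfying the combined triangle inequality and the combined 2-optimality condition, let l > 0, let E' := {(x,y) ∈ E(A) : c(x,y) < l · max_{f ∈ δ⁺(y)} c(f)}, and for r > 0 let E_r := {e ∈ E(A)∖E' : r < c(e) ≤ (l/4)·r}. Then c(E_r) ≤ 2 · w(A). -/
import Mathlib


open Classical

/-- An arborescence: a connected directed acyclic graph in which every vertex
has in-degree at most 1, encoded by its finite vertex set, its root, and the
parent map.  Every non-root vertex `v` carries the unique incoming edge
`(parent v, v)`, so edges are identified with non-root vertices. -/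
structure Arbor (α : Type*) where
  verts : Finset α
  root : α
  parent : α → α
  root_mem : root ∈ verts
  parent_mem : ∀ v ∈ verts, v ≠ root → parent v ∈ verts
  reaches_root : ∀ v ∈ verts, ∃ n : ℕ, parent^[n] v = root

variable {α : Type*} [DecidableEq α]

/-- The edges of an arborescence, identified with the non-root vertices:
the vertex `v` stands for the edge `(parent v, v)`. -/
def Arbor.edges (A : Arbor α) : Finset α := A.verts.erase A.root

/-- `δ⁺(y)`: the edges leaving `y`, identified with the children of `y`. -/
def Arbor.children (A : Arbor α) (y : α) : Finset α :=
  A.edges.filter fun u => A.parent u = y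

/-- The combined triangle inequality:
`c(e) ≤ w(e) + ∑_{f ∈ δ⁺(y)} c(f)` for every edge `e = (x,y)`. -/
def Arbor.CombinedTriangle (A : Arbor α) (w c : α → ℝ) : Prop :=
  ∀ y ∈ A.edges, c y ≤ w y + ∑ u ∈ A.children y, c u

/-- The combined 2-optimality condition:
`c(x,y) + c(y,z) ≤ w(x,y) + ∑_{f ∈ δ⁺(y) \ {(y,z)}} c(f)`
for all pairs of edges `(x,y), (y,z)`. -/
def Arbor.Combined2Opt (A : Arbor α) (w c : α → ℝ) : Prop :=
  ∀ y ∈ A.edges, ∀ z ∈ A.edges, A.parent z = y →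
    c y + c z ≤ w y + ∑ u ∈ (A.children y).erase z, c u
namespace Arbor

variable (A : Arbor α)

noncomputable def dep (v : α) : ℕ :=
  if h : ∃ n, A.parent^[n] v = A.root then Nat.find h else 0

lemma dep_apply {v : α} (h : ∃ n, A.parent^[n] v = A.root) :
    A.dep v = Nat.find h := dif_pos h

lemma dep_spec {v : α} (hv : v ∈ A.verts) :
    A.parent^[A.dep v] v = A.root := by
  have h := A.reaches_root v hv
  rw [A.dep_apply h]; exact Nat.find_spec h

lemma dep_le {v : α} {k : ℕ} (hk : A.parent^[k] v = A.root) :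
    A.dep v ≤ k := by
  have h : ∃ n, A.parent^[n] v = A.root := ⟨k, hk⟩
  rw [A.dep_apply h]; exact Nat.find_le hk

lemma dep_root : A.dep A.root = 0 := Nat.le_zero.mp (A.dep_le (by simp))

lemma mem_edges {v : α} : v ∈ A.edges ↔ v ≠ A.root ∧ v ∈ A.verts := Finset.mem_erase

lemma dep_ne_zero {v : α} (hv : v ∈ A.edges) : A.dep v ≠ 0 := by
  intro h0
  have h := A.dep_spec (A.mem_edges.mp hv).2
  rw [h0] at h
  exact (A.mem_edges.mp hv).1 h

lemma dep_parent {v : α} (hv : v ∈ A.edges) :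
    A.parent v ∈ A.verts ∧ A.dep (A.parent v) + 1 = A.dep v := by
  obtain ⟨hne, hmem⟩ := A.mem_edges.mp hv
  have hmemp : A.parent v ∈ A.verts := A.parent_mem v hmem hne
  refine ⟨hmemp, ?_⟩
  have hd := A.dep_spec hmem
  obtain ⟨m, hm⟩ := Nat.exists_eq_succ_of_ne_zero (A.dep_ne_zero hv)
  have hup : A.parent^[m] (A.parent v) = A.root := by
    rw [← Function.iterate_succ_apply, ← hm]; exact hd
  have hle : A.dep (A.parent v) ≤ m := A.dep_le hup
  have hge : A.dep v ≤ A.dep (A.parent v) + 1 := by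
    apply A.dep_le
    rw [Function.iterate_succ_apply]
    exact A.dep_spec hmemp
  omega

lemma chain (k : ℕ) : ∀ {v : α}, v ∈ A.verts → k ≤ A.dep v →
    A.parent^[k] v ∈ A.verts ∧ A.dep (A.parent^[k] v) + k = A.dep v := by
  induction k with
  | zero => intro v hv _; exact ⟨hv, rfl⟩
  | succ k ih =>
    intro v hv hk
    obtain ⟨h1, h2⟩ := ih hv (by omega)
    have hxne : A.parent^[k] v ≠ A.root := by
      intro h; rw [h, A.dep_root] at h2; omega
    have hxE : A.parent^[k] v ∈ A.edges := A.mem_edges.mpr ⟨hxne, h1⟩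
    obtain ⟨h3, h4⟩ := A.dep_parent hxE
    rw [Function.iterate_succ_apply']
    exact ⟨h3, by omega⟩

noncomputable def sub (y : α) : Finset α :=
  A.edges.filter (fun z => ∃ n, A.parent^[n] z = y ∧ n + A.dep y = A.dep z)

lemma mem_sub {y z : α} :
    z ∈ A.sub y ↔ z ∈ A.edges ∧ ∃ n, A.parent^[n] z = y ∧ n + A.dep y = A.dep z :=
  Finset.mem_filter

lemma self_mem_sub {u : α} (hu : u ∈ A.edges) : u ∈ A.sub u :=
  A.mem_sub.mpr ⟨hu, 0, rfl, by simp⟩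

lemma sub_root : A.sub A.root = A.edges := by
  ext z
  rw [A.mem_sub]
  constructor
  · exact fun h => h.1
  · intro hz
    exact ⟨hz, A.dep z, A.dep_spec (A.mem_edges.mp hz).2, by simp [A.dep_root]⟩

lemma sub_subset_of_child {y z : α} (hz : z ∈ A.children y) :
    A.sub z ⊆ (A.sub y).erase y := by
  intro v hv
  obtain ⟨hvE, n, h1, h2⟩ := A.mem_sub.mp hv
  have hzE : z ∈ A.edges := (Finset.mem_filter.mp hz).1
  have hpz : A.parent z = y := (Finset.mem_filter.mp hz).2
  have hdz := (A.dep_parent hzE).2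
  rw [hpz] at hdz
  refine Finset.mem_erase.mpr ⟨?_, A.mem_sub.mpr ⟨hvE, n + 1, ?_, by omega⟩⟩
  · rintro rfl
    have hn : n = 0 := by omega
    subst hn
    simp only [Function.iterate_zero, id] at h1
    subst h1
    omega
  · rw [Function.iterate_succ_apply', h1, hpz]

lemma exists_child_of_mem {y v : α} (hv : v ∈ (A.sub y).erase y) :
    ∃ z ∈ A.children y, v ∈ A.sub z := by
  obtain ⟨hne, hvs⟩ := Finset.mem_erase.mp hv
  obtain ⟨hvE, n, h1, h2⟩ := A.mem_sub.mp hvs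
  have hn : n ≠ 0 := by
    rintro rfl
    simp only [Function.iterate_zero, id] at h1
    exact hne h1
  obtain ⟨m, rfl⟩ := Nat.exists_eq_succ_of_ne_zero hn
  have hvmem : v ∈ A.verts := (A.mem_edges.mp hvE).2
  obtain ⟨hzmem, hzd⟩ := A.chain m hvmem (by omega)
  have hzne : A.parent^[m] v ≠ A.root := by
    intro h; rw [h, A.dep_root] at hzd; omega
  have hzE : A.parent^[m] v ∈ A.edges := A.mem_edges.mpr ⟨hzne, hzmem⟩
  have hpz : A.parent (A.parent^[m] v) = y := by
    rw [← Function.iterate_succ_apply' A.parent m v]; exact h1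
  refine ⟨A.parent^[m] v, Finset.mem_filter.mpr ⟨hzE, hpz⟩, A.mem_sub.mpr ⟨hvE, m, rfl, ?_⟩⟩
  omega

lemma erase_sub_eq (y : α) :
    (A.sub y).erase y = (A.children y).biUnion A.sub := by
  ext v
  simp only [Finset.mem_biUnion]
  constructor
  · exact fun h => A.exists_child_of_mem h
  · rintro ⟨z, hz, hv⟩; exact A.sub_subset_of_child hz hv

lemma sub_pairwiseDisjoint (y : α) :
    (↑(A.children y) : Set α).PairwiseDisjoint A.sub := by
  intro z hz z' hz' hne
  refine Finset.disjoint_left.mpr ?_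
  intro v hv hv'
  obtain ⟨hvE, n, h1, h2⟩ := A.mem_sub.mp hv
  obtain ⟨_, n', h1', h2'⟩ := A.mem_sub.mp hv'
  have hzE : z ∈ A.edges := (Finset.mem_filter.mp (Finset.mem_coe.mp hz)).1
  have hzE' : z' ∈ A.edges := (Finset.mem_filter.mp (Finset.mem_coe.mp hz')).1
  have hd1 := (A.dep_parent hzE).2
  have hd2 := (A.dep_parent hzE').2
  rw [(Finset.mem_filter.mp (Finset.mem_coe.mp hz)).2] at hd1
  rw [(Finset.mem_filter.mp (Finset.mem_coe.mp hz')).2] at hd2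
  have hnn : n = n' := by omega
  subst hnn
  exact hne (h1.symm.trans h1')

lemma sum_sub_split (g : α → ℝ) {u : α} (hu : u ∈ A.edges) :
    ∑ v ∈ A.sub u, g v = g u + ∑ z ∈ A.children u, ∑ v ∈ A.sub z, g v := by
  rw [← Finset.sum_biUnion (A.sub_pairwiseDisjoint u), ← A.erase_sub_eq u]
  exact (Finset.add_sum_erase _ g (A.self_mem_sub hu)).symm

lemma card_sub_lt {u z : α} (hu : u ∈ A.edges) (hz : z ∈ A.children u) :
    (A.sub z).card < (A.sub u).card := by
  have h1 : A.sub z ⊆ (A.sub u).erase u := A.sub_subset_of_child hz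
  have h2 := Finset.card_le_card h1
  have h3 : ((A.sub u).erase u).card < (A.sub u).card :=
    Finset.card_erase_lt_of_mem (A.self_mem_sub hu)
  omega

end Arbor

namespace Arbor

lemma band_main (A : Arbor α) (w c : α → ℝ)
    (hw : ∀ v ∈ A.edges, 0 < w v) (hc : ∀ v ∈ A.edges, 0 < c v)
    (htri : A.CombinedTriangle w c)
    (l r : ℝ) (hl : 0 < l) (hr : 0 < r) :
    ∀ N : ℕ, ∀ u ∈ A.edges, (A.sub u).card ≤ N →
      (∑ v ∈ A.sub u, if (¬ ∃ z ∈ A.children v, c v < l * c z) ∧ r < c v ∧ c v ≤ l / 4 * r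
          then c v else 0)
        + min (2 * c u) r ≤ 2 * ∑ v ∈ A.sub u, w v := by
  intro N
  induction N with
  | zero =>
    intro u hu hcard
    have := Finset.card_pos.mpr ⟨u, A.self_mem_sub hu⟩
    omega
  | succ N ih =>
    intro u hu hcard
    rw [A.sum_sub_split (fun v => if (¬ ∃ z ∈ A.children v, c v < l * c z) ∧ r < c v ∧ c v ≤ l / 4 * r
          then c v else 0) hu,
        A.sum_sub_split w hu]
    have ihz : ∀ z ∈ A.children u,
        (∑ v ∈ A.sub z, if (¬ ∃ z' ∈ A.children v, c v < l * c z') ∧ r < c v ∧ c v ≤ l / 4 * r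
            then c v else 0)
          + min (2 * c z) r ≤ 2 * ∑ v ∈ A.sub z, w v := by
      intro z hz
      have hzE : z ∈ A.edges := (Finset.mem_filter.mp hz).1
      have := A.card_sub_lt hu hz
      exact ih z hzE (by omega)
    have hcpos : ∀ z ∈ A.children u, 0 < c z := fun z hz => hc z (Finset.mem_filter.mp hz).1
    have htriu := htri u hu
    by_cases hQu : (¬ ∃ z ∈ A.children u, c u < l * c z) ∧ r < c u ∧ c u ≤ l / 4 * r
    · rw [if_pos hQu]
      have hcz : ∀ z ∈ A.children u, 2 * c z ≤ r := by
        intro z hz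
        have h1 : ¬ (c u < l * c z) := fun h => hQu.1 ⟨z, hz, h⟩
        push_neg at h1
        have h3 : l * c z ≤ l * (r / 4) := by nlinarith [hQu.2.2]
        have h4 : c z ≤ r / 4 := le_of_mul_le_mul_left h3 hl
        linarith
      have h1 : ∀ z ∈ A.children u,
          (∑ v ∈ A.sub z, if (¬ ∃ z' ∈ A.children v, c v < l * c z') ∧ r < c v ∧ c v ≤ l / 4 * r
              then c v else 0) + 2 * c z ≤ 2 * ∑ v ∈ A.sub z, w v := by
        intro z hz
        have := ihz z hz
        rwa [min_eq_left (hcz z hz)] at this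
      have h2 := Finset.sum_le_sum h1
      rw [Finset.sum_add_distrib] at h2
      have h5 : ∑ z ∈ A.children u, 2 * c z = 2 * ∑ z ∈ A.children u, c z :=
        (Finset.mul_sum _ _ _).symm
      have h6 : ∑ z ∈ A.children u, 2 * ∑ v ∈ A.sub z, w v
          = 2 * ∑ z ∈ A.children u, ∑ v ∈ A.sub z, w v := (Finset.mul_sum _ _ _).symm
      rw [h5, h6] at h2
      have hmle : min (2 * c u) r ≤ r := min_le_right _ _
      have hru : r < c u := hQu.2.1
      linarith
    · rw [if_neg hQu]
      have hG : ∀ z ∈ A.children u,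
          (∑ v ∈ A.sub z, if (¬ ∃ z' ∈ A.children v, c v < l * c z') ∧ r < c v ∧ c v ≤ l / 4 * r
              then c v else 0) ≤ 2 * (∑ v ∈ A.sub z, w v) - min (2 * c z) r := by
        intro z hz
        have := ihz z hz
        linarith
      have h2 := Finset.sum_le_sum hG
      rw [Finset.sum_sub_distrib] at h2
      have h6 : ∑ z ∈ A.children u, 2 * ∑ v ∈ A.sub z, w v
          = 2 * ∑ z ∈ A.children u, ∑ v ∈ A.sub z, w v := (Finset.mul_sum _ _ _).symm
      rw [h6] at h2
      have hkey : min (2 * c u) r ≤ 2 * w u + ∑ z ∈ A.children u, min (2 * c z) r := by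
        by_cases hex : ∃ z ∈ A.children u, r ≤ 2 * c z
        · obtain ⟨z0, hz0, hz0r⟩ := hex
          have hminz0 : min (2 * c z0) r = r := min_eq_right hz0r
          have hsingle : min (2 * c z0) r ≤ ∑ z ∈ A.children u, min (2 * c z) r :=
            Finset.single_le_sum (f := fun z => min (2 * c z) r) (fun z hz => le_min (by linarith [hcpos z hz]) hr.le) hz0
          have hwu := hw u hu
          have : min (2 * c u) r ≤ r := min_le_right _ _
          linarith
        · push_neg at hex
          have hsum : ∑ z ∈ A.children u, min (2 * c z) r = ∑ z ∈ A.children u, 2 * c z := by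
            refine Finset.sum_congr rfl fun z hz => min_eq_left (hex z hz).le
          have h5 : ∑ z ∈ A.children u, 2 * c z = 2 * ∑ z ∈ A.children u, c z :=
            (Finset.mul_sum _ _ _).symm
          have : min (2 * c u) r ≤ 2 * c u := min_le_left _ _
          rw [hsum, h5]
          linarith
      linarith

end Arbor

theorem arborescence_band_bound' {α : Type*} [DecidableEq α]
    (A : Arbor α) (w c : α → ℝ)
    (hw : ∀ v ∈ A.edges, 0 < w v) (hc : ∀ v ∈ A.edges, 0 < c v)
    (htri : A.CombinedTriangle w c)
    (l r : ℝ) (hl : 0 < l) (hr : 0 < r) :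
    ∑ v ∈ A.edges.filter
        (fun e => (¬ ∃ z ∈ A.children e, c e < l * c z) ∧ r < c e ∧ c e ≤ l / 4 * r),
      c v ≤ 2 * ∑ v ∈ A.edges, w v := by
  have h1 : (A.sub A.root).erase A.root = (A.children A.root).biUnion A.sub :=
    A.erase_sub_eq A.root
  have h2 : (A.sub A.root).erase A.root = A.edges := by
    rw [A.sub_root]
    exact Finset.erase_eq_of_notMem (Finset.notMem_erase _ _)
  calc ∑ v ∈ A.edges.filter
        (fun e => (¬ ∃ z ∈ A.children e, c e < l * c z) ∧ r < c e ∧ c e ≤ l / 4 * r), c v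
      = ∑ v ∈ A.edges,
          if (¬ ∃ z ∈ A.children v, c v < l * c z) ∧ r < c v ∧ c v ≤ l / 4 * r then c v else 0 :=
        Finset.sum_filter _ _
    _ = ∑ z ∈ A.children A.root, ∑ v ∈ A.sub z,
          if (¬ ∃ z' ∈ A.children v, c v < l * c z') ∧ r < c v ∧ c v ≤ l / 4 * r then c v
          else 0 := by
        rw [← h2, h1, Finset.sum_biUnion (A.sub_pairwiseDisjoint _)]
    _ ≤ ∑ z ∈ A.children A.root, 2 * ∑ v ∈ A.sub z, w v := by
        refine Finset.sum_le_sum fun z hz => ?_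
        have hzE : z ∈ A.edges := (Finset.mem_filter.mp hz).1
        have hmain := A.band_main w c hw hc htri l r hl hr (A.sub z).card z hzE le_rfl
        have hmin : 0 ≤ min (2 * c z) r := le_min (by linarith [hc z hzE]) hr.le
        linarith
    _ = 2 * ∑ z ∈ A.children A.root, ∑ v ∈ A.sub z, w v := (Finset.mul_sum _ _ _).symm
    _ = 2 * ∑ v ∈ A.edges, w v := by
        rw [← h2, h1, Finset.sum_biUnion (A.sub_pairwiseDisjoint _)]


/-- Let `A` be an arborescence with positive weight functions `w, c` on its
edges satisfying the combined triangle inequality and the combined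
2-optimality condition, let `l > 0`, let
`E' = {(x,y) ∈ E(A) : c(x,y) < l · max_{f ∈ δ⁺(y)} c(f)}` (max over the empty
set being `−∞`), and for `r > 0` let
`E_r = {e ∈ E(A) ∖ E' : r < c(e) ≤ (l/4)·r}`.  Then `c(E_r) ≤ 2 · w(A)`. -/
theorem arborescence_band_bound {α : Type*} [DecidableEq α]
    (A : Arbor α) (w c : α → ℝ)
    (hw : ∀ v ∈ A.edges, 0 < w v) (hc : ∀ v ∈ A.edges, 0 < c v)
    (htri : A.CombinedTriangle w c) (h2opt : A.Combined2Opt w c)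
    (l r : ℝ) (hl : 0 < l) (hr : 0 < r) :
    ∑ v ∈ A.edges.filter
        (fun e => (¬ ∃ z ∈ A.children e, c e < l * c z) ∧ r < c e ∧ c e ≤ l / 4 * r),
      c v ≤ 2 * ∑ v ∈ A.edges, w v := by
  exact arborescence_band_bound' A w c hw hc htri l r hl hr
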